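/- For real numbers s and r, define L_SE(s) := e^s - e^r·s + e^r·(r - 1) and the soft-label BCE loss L_sBCE(s) := -σ(r)·log σ(s) - (1 - σ(r))·log(1 - σ(s)), where σ is the logistic sigmoid. Then the derivatives satisfy L_SE'(s) = (1 + e^s)·(1 + e^r)·L_sBCE'(s). -/

import Mathlib

noncomputable def sigmoid (x : ℝ) : ℝ := 1 / (1 + Real.exp (-x))

/-! Both derivatives are differences: `L_SE' s = eˢ - eʳ`, while the soft-label cross entropy
has the classical logistic-regression gradient `L_sBCE' s = σ s - σ r`. Writing
`σ x = eˣ / (1 + eˣ)` and clearing denominators turns the second difference into the first. -/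

lemma sigmoid_eq_real_sigmoid : sigmoid = Real.sigmoid :=
  funext fun _ => one_div _

namespace Real

lemma sigmoid_eq_exp_div (x : ℝ) : sigmoid x = exp x / (1 + exp x) := by
  rw [sigmoid_def, exp_neg]
  field_simp [(exp_pos x).ne']
  ring

lemma exp_sub_exp_eq_mul_sigmoid_sub (s r : ℝ) :
    exp s - exp r = (1 + exp s) * (1 + exp r) * (sigmoid s - sigmoid r) := by
  rw [sigmoid_eq_exp_div, sigmoid_eq_exp_div]
  field_simp
  ring

lemma hasDerivAt_log_sigmoid (x : ℝ) :
    HasDerivAt (fun x => log (sigmoid x)) (1 - sigmoid x) x := by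
  convert (hasDerivAt_sigmoid x).log (sigmoid_pos x).ne' using 1
  field_simp [(sigmoid_pos x).ne']

lemma hasDerivAt_log_one_sub_sigmoid (x : ℝ) :
    HasDerivAt (fun x => log (1 - sigmoid x)) (-sigmoid x) x := by
  have h := (hasDerivAt_log_sigmoid (-x)).scomp x (hasDerivAt_neg x)
  simpa only [Function.comp_def, sigmoid_neg, sub_sub_cancel, neg_one_smul] using h

lemma hasDerivAt_crossEntropy_sigmoid (p x : ℝ) :
    HasDerivAt (fun s => -(p * log (sigmoid s)) - (1 - p) * log (1 - sigmoid s))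
      (sigmoid x - p) x := by
  refine (((hasDerivAt_log_sigmoid x).const_mul p).fun_neg.fun_sub
    ((hasDerivAt_log_one_sub_sigmoid x).const_mul (1 - p))).congr_deriv ?_
  ring

lemma hasDerivAt_exp_sub_mul_add (a b x : ℝ) :
    HasDerivAt (fun s => exp s - a * s + b) (exp x - a) x := by
  simpa using ((hasDerivAt_exp x).sub ((hasDerivAt_id x).const_mul a)).add_const b

end Real

/-- The score entropy loss and the soft-label BCE loss have proportional derivatives. -/
theorem scoreEntropy_deriv_eq_scaled_sBCE_deriv (r : ℝ) (s : ℝ) :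
    deriv (fun s => Real.exp s - Real.exp r * s + Real.exp r * (r - 1)) s =
      (1 + Real.exp s) * (1 + Real.exp r) *
        deriv (fun s => -(sigmoid r * Real.log (sigmoid s))
          - (1 - sigmoid r) * Real.log (1 - sigmoid s)) s := by
  rw [sigmoid_eq_real_sigmoid, (Real.hasDerivAt_exp_sub_mul_add _ _ s).deriv,
    (Real.hasDerivAt_crossEntropy_sigmoid _ s).deriv]
  exact Real.exp_sub_exp_eq_mul_sigmoid_sub s r
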